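/- arXiv:2407.00237 — 5 statements merged into one kernel-verified Lean document; each statement's English description precedes it below -/
import Mathlib

section
/- Let L₁, ..., L_ℓ be directed graphs that are pairwise vertex-disjoint except for three shared terminal vertices v₁, v₂, v₃, and let L be their union. Then for distinct i, j ∈ {1,2,3} with k the remaining index, there is a path of parity p from v_i to v_j in L avoiding v_k if and only if there is such a path in some L_a. (Direct path parities of a clique-sum of pieces glued at the terminals are the union of direct path parities of the pieces.) -/
/-- `l` is a simple directed path along the edge relation `E` from `a` to `b`. -/
def IsDipathFrom {V : Type*} (E : V → V → Prop) (l : List V) (a b : V) : Prop :=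
  l.Nodup ∧ l.Chain' E ∧ l.head? = some a ∧ l.getLast? = some b

/-- The length (number of edges) of a path given as its list of vertices. -/
def pathLen {V : Type*} (l : List V) : ℕ := l.length - 1

/-!
A path in the union whose interior avoids the terminals stays inside a single piece: two
consecutive edges taken from different pieces would share a vertex lying in two pieces, hence a
terminal, at an interior position. A simple path from `v i` to `v j` avoiding `v k` has no
terminal in its interior, so it lies in one piece.
-/

theorem Fin.eq_or_eq_or_eq_of_ne {i j k : Fin 3} (hij : i ≠ j) (hjk : j ≠ k) (hik : i ≠ k)
    (m : Fin 3) : m = i ∨ m = j ∨ m = k := by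
  simp only [ne_eq, Fin.ext_iff] at *
  omega

theorem List.exists_eq_cons_append_singleton {V : Type*} {l : List V} {x y : V}
    (hhead : l.head? = some x) (hlast : l.getLast? = some y) (hxy : x ≠ y) :
    ∃ mid, l = x :: mid ++ [y] := by
  obtain rfl | ⟨t, y', rfl⟩ := l.eq_nil_or_concat'
  · simp at hhead
  · obtain rfl : y' = y := by simpa using hlast
    cases t with
    | nil => simp_all
    | cons x' mid =>
      obtain rfl : x' = x := by simpa using hhead
      exact ⟨mid, rfl⟩

section Pieces

variable {ι V : Type*} {E : ι → V → V → Prop} {S : ι → Set V} {T : Set V}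

theorem exists_piece_of_isChain_union (hE : ∀ a u w, E a u w → u ∈ S a ∧ w ∈ S a)
    (hST : ∀ a b, a ≠ b → S a ∩ S b ⊆ T) {y : V} :
    ∀ {x : V} {mid : List V}, (x :: mid ++ [y]).IsChain (fun u w => ∃ a, E a u w) →
      (∀ w ∈ mid, w ∉ T) → ∃ a, x ∈ S a ∧ (x :: mid ++ [y]).IsChain (E a)
  | x, [], hch, _ => by
    obtain ⟨a, ha⟩ := (List.isChain_pair.mp hch)
    exact ⟨a, (hE a x y ha).1, List.isChain_pair.mpr ha⟩
  | x, z :: mid, hch, hmid => by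
    obtain ⟨⟨a₀, hxz⟩, hch'⟩ := List.isChain_cons_cons.mp hch
    obtain ⟨a, hz, ha⟩ := exists_piece_of_isChain_union hE hST hch' fun w hw => hmid w (.tail z hw)
    obtain rfl : a₀ = a := by
      by_contra hne
      exact hmid z (.head mid) (hST a₀ a hne ⟨(hE a₀ x z hxz).2, hz⟩)
    exact ⟨a₀, (hE a₀ x z hxz).1, List.isChain_cons_cons.mpr ⟨hxz, ha⟩⟩

end Pieces

theorem notMem_range_of_ne {V : Type*} {v : Fin 3 → V} {i j k : Fin 3} (hij : i ≠ j)
    (hjk : j ≠ k) (hik : i ≠ k) {w : V} (hi : w ≠ v i) (hj : w ≠ v j) (hk : w ≠ v k) :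
    w ∉ Set.range v := by
  rintro ⟨m, rfl⟩
  rcases Fin.eq_or_eq_or_eq_of_ne hij hjk hik m with rfl | rfl | rfl <;> simp_all

theorem stmt_3_general {V : Type*} {ℓ : ℕ} (E : Fin ℓ → V → V → Prop) (S : Fin ℓ → Set V)
    (v : Fin 3 → V) (hv : Function.Injective v)
    (hE : ∀ a u w, E a u w → u ∈ S a ∧ w ∈ S a)
    (hInter : ∀ a b, a ≠ b → S a ∩ S b = {v 0, v 1, v 2})
    (i j k : Fin 3) (hij : i ≠ j) (hjk : j ≠ k) (hik : i ≠ k) (p : ℕ) :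
    (∃ l : List V, IsDipathFrom (fun u w => ∃ a, E a u w) l (v i) (v j) ∧
      v k ∉ l ∧ pathLen l % 2 = p) ↔
    (∃ (a : Fin ℓ) (l : List V), IsDipathFrom (E a) l (v i) (v j) ∧
      v k ∉ l ∧ pathLen l % 2 = p) := by
  refine ⟨?_, fun ⟨a, l, ⟨hnd, hch, hhd, hlast⟩, hk, hp⟩ =>
    ⟨l, ⟨hnd, hch.imp fun _ _ h => ⟨a, h⟩, hhd, hlast⟩, hk, hp⟩⟩
  rintro ⟨l, ⟨hnd, hch, hhd, hlast⟩, hk, hp⟩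
  obtain ⟨mid, rfl⟩ := List.exists_eq_cons_append_singleton hhd hlast (hv.ne hij)
  have hST : ∀ a b, a ≠ b → S a ∩ S b ⊆ Set.range v := fun a b hab => by
    rw [hInter a b hab]
    rintro _ (rfl | rfl | rfl) <;> exact ⟨_, rfl⟩
  have hmid : ∀ w ∈ mid, w ∉ Set.range v := fun w hw => by
    have hnd' := List.nodup_cons.mp hnd
    refine notMem_range_of_ne hij hjk hik ?_ ?_ ?_
    · exact fun h => hnd'.1 (h ▸ List.mem_append_left _ hw)
    · exact fun h => List.disjoint_of_nodup_append hnd'.2 hw (h ▸ List.mem_singleton_self _)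
    · exact fun h => hk (h ▸ List.mem_cons_of_mem _ (List.mem_append_left _ hw))
  obtain ⟨a, -, ha⟩ := exists_piece_of_isChain_union hE hST hch hmid
  exact ⟨a, _, ⟨hnd, ha, hhd, hlast⟩, hk, hp⟩

/-- Let `L₁, …, L_ℓ` be directed graphs pairwise vertex-disjoint except for three
shared terminals `v 0, v 1, v 2`, and let `L` be their union.  For distinct `i, j, k`,
there is a simple path of parity `p` from `v i` to `v j` in `L` avoiding `v k`
iff there is such a path in some piece `L a`. -/
theorem stmt_3 {V : Type*} {ℓ : ℕ} (E : Fin ℓ → V → V → Prop) (S : Fin ℓ → Set V)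
    (v : Fin 3 → V) (hv : Function.Injective v)
    (hterm : ∀ (a : Fin ℓ) (m : Fin 3), v m ∈ S a)
    (hE : ∀ a u w, E a u w → u ∈ S a ∧ w ∈ S a)
    (hInter : ∀ a b, a ≠ b → S a ∩ S b = {v 0, v 1, v 2})
    (i j k : Fin 3) (hij : i ≠ j) (hjk : j ≠ k) (hik : i ≠ k) (p : ℕ) :
    (∃ l : List V, IsDipathFrom (fun u w => ∃ a, E a u w) l (v i) (v j) ∧
      v k ∉ l ∧ pathLen l % 2 = p) ↔
    (∃ (a : Fin ℓ) (l : List V), IsDipathFrom (E a) l (v i) (v j) ∧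
      v k ∉ l ∧ pathLen l % 2 = p) :=
  stmt_3_general E S v hv hE hInter i j k hij hjk hik p
end

section
/- Let P be the parity configuration of a directed graph L with respect to terminals v₁, v₂, v₃ in which L is strongly connected on the terminals (there is at least one path between every ordered pair of distinct terminals avoiding the third or through it). Then for any distinct i, j, k, the number of bad pairs between Dir(v_i, v_j) and Dir(v_j, v_k) is at most two, where (x, y) with x ∈ Dir(v_i,v_j), y ∈ Dir(v_j,v_k) is a bad pair if x + y (mod 2) is in neither Dir(v_i,v_k) nor Via(v_i,v_j,v_k). Moreover, if there are two bad pairs between these sets, then Dir(v_i,v_j) = Dir(v_j,v_k) = {0,1} and the two bad pairs are (x,y) and (x+1,y+1). -/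
/-- `p ∈ Dir(a, b)` (w.r.t. the third terminal `c`): there is a simple directed path of
parity `p` from `a` to `b` avoiding `c`. -/
def HasDir {V : Type*} (E : V → V → Prop) (a b c : V) (p : ℕ) : Prop :=
  ∃ l : List V, IsDipathFrom E l a b ∧ c ∉ l ∧ pathLen l % 2 = p

/-- `p ∈ Via(a, m, b)`: there is a simple path of parity `p` from `a` to `b` through `m`,
and no simple path of parity `p` from `a` to `b` avoids `m`. -/
def HasVia {V : Type*} (E : V → V → Prop) (a m b : V) (p : ℕ) : Prop :=
  (∃ l : List V, IsDipathFrom E l a b ∧ m ∈ l ∧ pathLen l % 2 = p) ∧ ¬ HasDir E a b m p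

/-- `(x, y)` is a bad pair between `Dir(v i, v j)` and `Dir(v j, v k)`. -/
def BadPair {V : Type*} (E : V → V → Prop) (v : Fin 3 → V) (i j k : Fin 3) (x y : ℕ) : Prop :=
  HasDir E (v i) (v j) (v k) x ∧ HasDir E (v j) (v k) (v i) y ∧
    ¬ (HasDir E (v i) (v k) (v j) ((x + y) % 2) ∨ HasVia E (v i) (v j) (v k) ((x + y) % 2))

/-- Any simple path of parity `p` from `a` to `b` witnesses `Dir` or `Via`. -/
lemma dir_or_via {V : Type*} (E : V → V → Prop) (a m b : V)
    (l : List V) (hl : IsDipathFrom E l a b) :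
    HasDir E a b m (pathLen l % 2) ∨ HasVia E a m b (pathLen l % 2) := by
  by_cases h : HasDir E a b m (pathLen l % 2)
  · exact Or.inl h
  · refine Or.inr ⟨⟨l, hl, ?_, rfl⟩, h⟩
    by_contra hm
    exact h ⟨l, hl, hm, rfl⟩

/-- For a parity configuration realized by a digraph `L` that is strongly connected on the
terminals, the number of bad pairs between `Dir(v i, v j)` and `Dir(v j, v k)` is at most two;
and two bad pairs force `Dir(v i, v j) = Dir(v j, v k) = {0,1}` and the pairs are
`(x, y)` and `(x+1, y+1)`. -/
theorem stmt_7 {V : Type*} (E : V → V → Prop) (v : Fin 3 → V) (hv : Function.Injective v)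
    (hconn : ∀ i j : Fin 3, i ≠ j → ∃ l : List V, IsDipathFrom E l (v i) (v j))
    (i j k : Fin 3) (hij : i ≠ j) (hjk : j ≠ k) (hik : i ≠ k) :
    ({q : ℕ × ℕ | q.1 < 2 ∧ q.2 < 2 ∧ BadPair E v i j k q.1 q.2}.encard ≤ 2) ∧
    (∀ x y x' y' : ℕ, x < 2 → y < 2 → x' < 2 → y' < 2 →
      BadPair E v i j k x y → BadPair E v i j k x' y' → (x, y) ≠ (x', y') →
      (HasDir E (v i) (v j) (v k) 0 ∧ HasDir E (v i) (v j) (v k) 1 ∧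
       HasDir E (v j) (v k) (v i) 0 ∧ HasDir E (v j) (v k) (v i) 1) ∧
      x' = (x + 1) % 2 ∧ y' = (y + 1) % 2) := by
  obtain ⟨l, hl⟩ := hconn i k hik
  set p0 : ℕ := pathLen l % 2 with hp0def
  have hp0 : p0 < 2 := Nat.mod_lt _ (by norm_num)
  have hbad : ∀ x y : ℕ, BadPair E v i j k x y → (x + y) % 2 ≠ p0 := by
    intro x y hb heq
    exact hb.2.2 (heq ▸ dir_or_via E (v i) (v j) (v k) l hl)
  constructor
  · have hsub : {q : ℕ × ℕ | q.1 < 2 ∧ q.2 < 2 ∧ BadPair E v i j k q.1 q.2} ⊆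
        {((1 - p0), 0), (p0, 1)} := by
      rintro ⟨x, y⟩ ⟨hx, hy, hb⟩
      have h := hbad x y hb
      simp only [Set.mem_insert_iff, Set.mem_singleton_iff, Prod.mk.injEq]
      omega
    calc _ ≤ ({((1 - p0), 0), (p0, 1)} : Set (ℕ × ℕ)).encard := Set.encard_le_encard hsub
      _ ≤ ({(p0, 1)} : Set (ℕ × ℕ)).encard + 1 := Set.encard_insert_le _ _
      _ = 2 := by rw [Set.encard_singleton]; rfl
  · intro x y x' y' hx hy hx' hy' hb hb' hne
    have h1 := hbad x y hb
    have h2 := hbad x' y' hb'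
    have hor : x ≠ x' ∨ y ≠ y' := by
      by_contra hc
      push_neg at hc
      exact hne (by rw [hc.1, hc.2])
    have hxx : x' = (x + 1) % 2 ∧ y' = (y + 1) % 2 := by omega
    refine ⟨⟨?_, ?_, ?_, ?_⟩, hxx⟩ <;>
    · rcases (by omega : x = 0 ∧ x' = 1 ∨ x = 1 ∧ x' = 0) with ⟨h, h'⟩ | ⟨h, h'⟩ <;>
      rcases (by omega : y = 0 ∧ y' = 1 ∨ y = 1 ∧ y' = 0) with ⟨g, g'⟩ | ⟨g, g'⟩ <;>
      first
        | exact h ▸ hb.1 | exact h' ▸ hb'.1 | exact g ▸ hb.2.1 | exact g' ▸ hb'.2.1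
end

section
/- Any realizable parity configuration on three terminals has at most 6 bad pairs in total. -/
/-! All bad pairs between `Dir(vᵢ, vⱼ)` and `Dir(vⱼ, vₖ)` have the same parity sum: splicing
any `vᵢ → vⱼ` path with any `vⱼ → vₖ` path yields a simple `vᵢ → vₖ` path, whose parity lies in
`Dir(vᵢ, vₖ) ∪ Via(vᵢ, vⱼ, vₖ)` and hence is not the sum of a bad pair. So there are at most
two bad pairs there, one for each parity of `x`. If there are two, then `Dir(vᵢ, vⱼ) = {0, 1}`,
which rules out every bad pair between `Dir(vᵢ, vₖ)` and `Dir(vₖ, vⱼ)`. Hence each of the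
three pairs of "mirror" triples `(i, j, k)`, `(i, k, j)` contributes at most two bad pairs. -/

namespace IsDipathFrom

variable {V : Type*} {E : V → V → Prop} {a b c : V} {l : List V}

lemma ne_nil (h : IsDipathFrom E l a b) : l ≠ [] := by
  rintro rfl
  simp [IsDipathFrom] at h

lemma head_mem (h : IsDipathFrom E l a b) : a ∈ l :=
  List.mem_of_mem_head? h.2.2.1

lemma cons (h : IsDipathFrom E l b c) (hab : E a b) (ha : a ∉ l) :
    IsDipathFrom E (a :: l) a c := by
  obtain ⟨hnd, hch, hhd, hlast⟩ := h
  obtain ⟨t, rfl⟩ := List.head?_eq_some_iff.1 hhd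
  exact ⟨List.nodup_cons.2 ⟨ha, hnd⟩, List.isChain_cons_cons.2 ⟨hab, hch⟩, rfl,
    by rwa [List.getLast?_cons_cons]⟩

lemma of_cons_cons (h : IsDipathFrom E (a :: b :: l) a c) :
    E a b ∧ IsDipathFrom E (b :: l) b c := by
  obtain ⟨hnd, hch, -, hlast⟩ := h
  obtain ⟨hab, hch⟩ := List.isChain_cons_cons.1 hch
  exact ⟨hab, hnd.of_cons, hch, rfl, by rwa [List.getLast?_cons_cons] at hlast⟩

lemma of_append_cons {l₁ l₂ : List V} {m : V} (h : IsDipathFrom E (l₁ ++ m :: l₂) a c) :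
    IsDipathFrom E (m :: l₂) m c := by
  obtain ⟨hnd, hch, -, hlast⟩ := h
  have hsuf : (m :: l₂) <:+ l₁ ++ m :: l₂ := List.suffix_append _ _
  refine ⟨hnd.sublist hsuf.sublist, hch.suffix hsuf, rfl, ?_⟩
  rw [List.getLast?_append, List.getLast?_cons, Option.some_or] at hlast
  rwa [List.getLast?_cons]

lemma splice {P Q : List V} (hP : IsDipathFrom E P a b) (hQ : IsDipathFrom E Q b c) :
    ∃ R, IsDipathFrom E R a c ∧ ∀ x ∈ R, x ∈ P ∨ x ∈ Q := by
  induction P generalizing a with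
  | nil => exact absurd rfl hP.ne_nil
  | cons p P ih =>
    obtain rfl : p = a := by simpa using hP.2.2.1
    by_cases hpQ : p ∈ Q
    · obtain ⟨Q₁, Q₂, rfl⟩ := List.append_of_mem hpQ
      exact ⟨p :: Q₂, hQ.of_append_cons, fun x hx => Or.inr (by simp_all)⟩
    · cases P with
      | nil =>
        obtain rfl : p = b := by simpa using hP.2.2.2
        exact absurd hQ.head_mem hpQ
      | cons q P =>
        obtain ⟨hpq, hP'⟩ := hP.of_cons_cons
        obtain ⟨R, hR, hRPQ⟩ := ih hP'
        have hpR : p ∉ R := fun hp => (hRPQ p hp).elim (List.nodup_cons.1 hP.1).1 hpQ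
        refine ⟨p :: R, hR.cons hpq hpR, fun x hx => ?_⟩
        rcases List.mem_cons.1 hx with rfl | hx
        · exact Or.inl List.mem_cons_self
        · exact (hRPQ x hx).imp (List.mem_cons_of_mem p) id

lemma hasDir_or_hasVia {R : List V} (hR : IsDipathFrom E R a c) (b : V) :
    HasDir E a c b (pathLen R % 2) ∨ HasVia E a b c (pathLen R % 2) :=
  or_iff_not_imp_left.2 fun hDir =>
    ⟨⟨R, hR, by_contra fun hb => hDir ⟨R, hR, hb, rfl⟩, rfl⟩, hDir⟩

end IsDipathFrom

section BadPairs

variable {V : Type*} (E : V → V → Prop) (v : Fin 3 → V) (i j k : Fin 3)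

def badPairs : Set (ℕ × ℕ) :=
  {q | q.1 < 2 ∧ q.2 < 2 ∧ BadPair E v i j k q.1 q.2}

variable {E v i j k}

lemma BadPair.add_mod_two_eq {x y x' y' : ℕ} (h : BadPair E v i j k x y)
    (h' : BadPair E v i j k x' y') : (x + y) % 2 = (x' + y') % 2 := by
  obtain ⟨P, hP, -⟩ := h.1
  obtain ⟨Q, hQ, -⟩ := h.2.1
  obtain ⟨R, hR, -⟩ := hP.splice hQ
  have hgood := hR.hasDir_or_hasVia (v j)
  by_contra hne
  rcases (by omega : pathLen R % 2 = (x + y) % 2 ∨ pathLen R % 2 = (x' + y') % 2) with hR2 | hR2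
  · exact h.2.2 (hR2 ▸ hgood)
  · exact h'.2.2 (hR2 ▸ hgood)

variable (E v i j k)

lemma encard_badPairs_le_two : (badPairs E v i j k).encard ≤ 2 := by
  rcases (badPairs E v i j k).eq_empty_or_nonempty with h | ⟨⟨x₀, y₀⟩, h₀⟩
  · simp [h]
  have hsub : badPairs E v i j k ⊆ {(0, (x₀ + y₀) % 2), (1, (x₀ + y₀ + 1) % 2)} := by
    rintro ⟨x, y⟩ hxy
    have hsum := hxy.2.2.add_mod_two_eq h₀.2.2
    obtain ⟨hx, hy, -⟩ := hxy
    obtain ⟨hx₀, hy₀, -⟩ := h₀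
    simp only [Set.mem_insert_iff, Set.mem_singleton_iff, Prod.mk.injEq]
    omega
  calc (badPairs E v i j k).encard
      ≤ ({(0, (x₀ + y₀) % 2), (1, (x₀ + y₀ + 1) % 2)} : Set (ℕ × ℕ)).encard :=
        Set.encard_mono hsub
    _ ≤ ({(1, (x₀ + y₀ + 1) % 2)} : Set (ℕ × ℕ)).encard + 1 := Set.encard_insert_le _ _
    _ = 2 := by rw [Set.encard_singleton]; rfl

variable {E v i j k}

lemma hasDir_of_one_lt_encard_badPairs (h : 1 < (badPairs E v i j k).encard) {p : ℕ}
    (hp : p < 2) : HasDir E (v i) (v j) (v k) p := by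
  obtain ⟨q, q', ⟨hq1, hq2, hq⟩, ⟨hq1', hq2', hq'⟩, hne⟩ := Set.one_lt_encard_iff.1 h
  have hsum := hq.add_mod_two_eq hq'
  have hfst : q.1 ≠ q'.1 := fun h1 => hne (Prod.ext h1 (by omega))
  rcases (by omega : p = q.1 ∨ p = q'.1) with rfl | rfl
  · exact hq.1
  · exact hq'.1

lemma badPairs_swap_eq_empty (h : 1 < (badPairs E v i j k).encard) :
    badPairs E v i k j = ∅ :=
  Set.eq_empty_of_forall_notMem fun _ hq =>
    hq.2.2.2.2 (Or.inl (hasDir_of_one_lt_encard_badPairs h (Nat.mod_lt _ two_pos)))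

variable (E v i j k)

lemma encard_badPairs_add_encard_badPairs_swap_le_two :
    (badPairs E v i j k).encard + (badPairs E v i k j).encard ≤ 2 := by
  by_cases h₁ : 1 < (badPairs E v i j k).encard
  · simpa [badPairs_swap_eq_empty h₁] using encard_badPairs_le_two E v i j k
  by_cases h₂ : 1 < (badPairs E v i k j).encard
  · simpa [badPairs_swap_eq_empty h₂] using encard_badPairs_le_two E v i k j
  rw [not_lt] at h₁ h₂
  calc _ ≤ (1 : ℕ∞) + 1 := add_le_add h₁ h₂
    _ = 2 := one_add_one_eq_two

end BadPairs

theorem stmt_9_general {V : Type*} (E : V → V → Prop) (v : Fin 3 → V) :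
    ∑ r ∈ Finset.univ.filter
        (fun r : Fin 3 × Fin 3 × Fin 3 => r.1 ≠ r.2.1 ∧ r.2.1 ≠ r.2.2 ∧ r.1 ≠ r.2.2),
      {q : ℕ × ℕ | q.1 < 2 ∧ q.2 < 2 ∧ BadPair E v r.1 r.2.1 r.2.2 q.1 q.2}.encard
      ≤ (6 : ℕ∞) := by
  have htriples : Finset.univ.filter
        (fun r : Fin 3 × Fin 3 × Fin 3 => r.1 ≠ r.2.1 ∧ r.2.1 ≠ r.2.2 ∧ r.1 ≠ r.2.2)
      = {(0, 1, 2), (0, 2, 1), (2, 0, 1), (2, 1, 0), (1, 2, 0), (1, 0, 2)} := by decide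
  change ∑ r ∈ (_ : Finset (Fin 3 × Fin 3 × Fin 3)), (badPairs E v r.1 r.2.1 r.2.2).encard ≤ _
  rw [htriples, Finset.sum_insert (by decide), Finset.sum_insert (by decide),
    Finset.sum_insert (by decide), Finset.sum_insert (by decide),
    Finset.sum_insert (by decide), Finset.sum_singleton]
  calc _ = ((badPairs E v 0 1 2).encard + (badPairs E v 0 2 1).encard) +
        ((badPairs E v 2 0 1).encard + (badPairs E v 2 1 0).encard) +
        ((badPairs E v 1 2 0).encard + (badPairs E v 1 0 2).encard) := by ac_rfl
    _ ≤ 2 + 2 + 2 := by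
        gcongr <;> exact encard_badPairs_add_encard_badPairs_swap_le_two E v _ _ _
    _ = 6 := by norm_num

/-- Any realizable parity configuration on three terminals (one arising from an actual
directed graph `E` with distinct terminals `v 0, v 1, v 2`) has at most 6 bad pairs in
total, summed over all six ordered triples of distinct terminals. -/
theorem stmt_9 {V : Type*} (E : V → V → Prop) (v : Fin 3 → V) (hv : Function.Injective v) :
    ∑ r ∈ Finset.univ.filter
        (fun r : Fin 3 × Fin 3 × Fin 3 => r.1 ≠ r.2.1 ∧ r.2.1 ≠ r.2.2 ∧ r.1 ≠ r.2.2),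
      {q : ℕ × ℕ | q.1 < 2 ∧ q.2 < 2 ∧ BadPair E v r.1 r.2.1 r.2.2 q.1 q.2}.encard
      ≤ (6 : ℕ∞) :=
  stmt_9_general E v
end

section
/- If a realizable parity configuration P has a bad pair (x, y) with x ∈ Dir(v_i,v_j) and y ∈ Dir(v_j,v_k), then x + y + 1 (mod 2) ∈ Dir(v_i,v_k): the unique other parity must be achievable by a direct path from v_i to v_k. -/
theorem List.exists_eq_append_cons_of_exists_mem {α : Type*} {p : α → Prop} {l : List α}
    (h : ∃ x ∈ l, p x) :
    ∃ l₁ a l₂, l = l₁ ++ a :: l₂ ∧ p a ∧ ∀ b ∈ l₁, ¬ p b := by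
  classical
  obtain ⟨a, ha⟩ := Option.isSome_iff_exists.mp
    (List.find?_isSome (p := fun x => decide (p x)) |>.mpr (by simpa using h))
  obtain ⟨hpa, l₁, l₂, rfl, hl₁⟩ := List.find?_eq_some_iff_append.mp ha
  exact ⟨l₁, a, l₂, rfl, by simpa using hpa, fun b hb => by simpa using hl₁ b hb⟩

theorem List.eq_nil_of_getLast?_cons_eq_self {α : Type*} {a : α} {l : List α}
    (hnd : (a :: l).Nodup) (hlast : (a :: l).getLast? = some a) : l = [] := by
  cases l with
  | nil => rfl
  | cons b t =>
    rw [List.getLast?_cons_cons] at hlast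
    exact absurd (List.mem_of_getLast? hlast) (List.nodup_cons.mp hnd).1

section Dipath

variable {V : Type*} {E : V → V → Prop}

theorem IsDipathFrom.splice_s10 {P₁ P₂ Q₁ Q₂ : List V} {u a b b' c : V}
    (hP : IsDipathFrom E (P₁ ++ u :: P₂) a b) (hQ : IsDipathFrom E (Q₁ ++ u :: Q₂) b' c)
    (hdisj : ∀ z ∈ P₁, z ∉ Q₂) : IsDipathFrom E (P₁ ++ u :: Q₂) a c := by
  obtain ⟨hPnd, hPch, hPh, -⟩ := hP
  obtain ⟨hQnd, hQch, -, hQl⟩ := hQ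
  refine ⟨?_, ?_, ?_, ?_⟩
  · have hPnd' := List.nodup_append.mp hPnd
    refine List.nodup_append.mpr ⟨hPnd'.1, (List.nodup_append.mp hQnd).2.1, ?_⟩
    rintro z hz w hw rfl
    rcases List.mem_cons.mp hw with rfl | hw
    · exact hPnd'.2.2 z hz z List.mem_cons_self rfl
    · exact hdisj z hz hw
  · have hP₁u : (P₁ ++ [u]).IsChain E := hPch.infix ⟨[], P₂, by simp⟩
    have huQ₂ : ([u] ++ Q₂).IsChain E := hQch.infix ⟨Q₁, [], by simp⟩
    have h := hP₁u.append_overlap huQ₂ (List.cons_ne_nil u [])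
    rwa [List.append_assoc, List.singleton_append] at h
  · simpa [List.head?_append] using hPh
  · rwa [List.getLast?_append_cons] at hQl ⊢

theorem IsDipathFrom.exists_shortcut {P Q : List V} {a b c : V}
    (hP : IsDipathFrom E P a b) (hQ : IsDipathFrom E Q b c) :
    ∃ R, IsDipathFrom E R a c ∧ (b ∈ R → pathLen R = pathLen P + pathLen Q) := by
  obtain ⟨Q', rfl⟩ := List.head?_eq_some_iff.mp hQ.2.2.1
  obtain ⟨P₁, u, P₂, rfl, huQ, hP₁⟩ := List.exists_eq_append_cons_of_exists_mem
    ⟨b, List.mem_of_getLast? hP.2.2.2, List.mem_cons_self⟩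
  rcases List.mem_cons.mp huQ with rfl | huQ'
  · refine ⟨P₁ ++ u :: Q', hP.splice_s10 (Q₁ := []) hQ fun z hz hzQ => hP₁ z hz (.tail _ hzQ),
      fun _ => ?_⟩
    have hP₂ : P₂ = [] := List.eq_nil_of_getLast?_cons_eq_self
      (List.nodup_append.mp hP.1).2.1 (by rw [← List.getLast?_append_cons P₁]; exact hP.2.2.2)
    simp [pathLen, hP₂]
  · obtain ⟨Q₁, Q₂, rfl⟩ := List.append_of_mem huQ'
    refine ⟨P₁ ++ u :: Q₂,
      hP.splice_s10 (Q₁ := b :: Q₁) hQ fun z hz hzQ => hP₁ z hz (by simp [hzQ]), ?_⟩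
    intro hbR
    exfalso
    have hbQ' : b ∉ Q₁ ++ u :: Q₂ := (List.nodup_cons.mp hQ.1).1
    rcases List.mem_append.mp hbR with hb | hb
    · exact hP₁ b hb List.mem_cons_self
    · exact hbQ' (List.mem_append_right _ hb)

end Dipath

theorem stmt_10_general {V : Type*} (E : V → V → Prop) (v : Fin 3 → V)
    (i j k : Fin 3) (x y : ℕ)
    (hxDir : HasDir E (v i) (v j) (v k) x) (hyDir : HasDir E (v j) (v k) (v i) y)
    (hbad : ¬ (HasDir E (v i) (v k) (v j) ((x + y) % 2) ∨
               HasVia E (v i) (v j) (v k) ((x + y) % 2))) :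
    HasDir E (v i) (v k) (v j) ((x + y + 1) % 2) := by
  obtain ⟨P, hP, -, hPx⟩ := hxDir
  obtain ⟨Q, hQ, -, hQy⟩ := hyDir
  obtain ⟨R, hR, hRlen⟩ := hP.exists_shortcut hQ
  by_cases hjR : v j ∈ R
  · have hpar : pathLen R % 2 = (x + y) % 2 := by rw [hRlen hjR]; omega
    exact absurd (.inr ⟨⟨R, hR, hjR, hpar⟩, fun hdir => hbad (.inl hdir)⟩) hbad
  · have hpar : pathLen R % 2 ≠ (x + y) % 2 := fun hpar => hbad (.inl ⟨R, hR, hjR, hpar⟩)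
    exact ⟨R, hR, hjR, by omega⟩

/-- If a realizable parity configuration has a bad pair `(x, y)` with `x ∈ Dir(v i, v j)`
and `y ∈ Dir(v j, v k)`, then `x + y + 1 (mod 2) ∈ Dir(v i, v k)`: the unique other parity
must be achievable by a direct path from `v i` to `v k`. -/
theorem stmt_10 {V : Type*} (E : V → V → Prop) (v : Fin 3 → V) (hv : Function.Injective v)
    (i j k : Fin 3) (hij : i ≠ j) (hjk : j ≠ k) (hik : i ≠ k) (x y : ℕ) (hx : x < 2) (hy : y < 2)
    (hxDir : HasDir E (v i) (v j) (v k) x) (hyDir : HasDir E (v j) (v k) (v i) y)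
    (hbad : ¬ (HasDir E (v i) (v k) (v j) ((x + y) % 2) ∨
               HasVia E (v i) (v j) (v k) ((x + y) % 2))) :
    HasDir E (v i) (v k) (v j) ((x + y + 1) % 2) :=
  stmt_10_general E v i j k x y hxDir hyDir hbad
end

section
/- Let G be a directed graph decomposed as a 3-clique-sum G = G₁ ⊕_c G₂ at clique c = {v₁, v₂, v₃}, with s, t ∈ V(G₁) \ c. Let L' be a directed graph on terminal set c (disjoint from G₁ otherwise) having the same parity configuration as G₂ with respect to c. Then G has a simple s→t path of parity p if and only if G₁ ⊕_c L' has a simple s→t path of parity p. -/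
namespace List

variable {α : Type*}

theorem exists_maximal_isChain_prefix (T : α → α → Prop) (a : α) (l : List α) :
    ∃ M B, a :: l = M ++ B ∧ M ≠ [] ∧ M.IsChain T ∧
      ∀ x ∈ M.getLast?, ∀ y ∈ B.head?, ¬ T x y := by
  induction l generalizing a with
  | nil => exact ⟨[a], [], by simp, by simp, .singleton a, by simp⟩
  | cons b l ih =>
    by_cases hab : T a b
    · obtain ⟨M, B, hbl, hM, hMc, hj⟩ := ih b
      obtain ⟨M', rfl⟩ : ∃ M', M = b :: M' := by
        cases M with
        | nil => exact absurd rfl hM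
        | cons c M' => simp only [cons_append, cons.injEq] at hbl; exact ⟨M', by rw [hbl.1]⟩
      refine ⟨a :: b :: M', B, by rw [hbl]; rfl, by simp, hMc.cons_cons hab, ?_⟩
      simpa [getLast?_cons_cons] using hj
    · exact ⟨[a], b :: l, rfl, by simp, .singleton a, by simpa using hab⟩

theorem exists_split_of_not_isChain {R : α → α → Prop} {l : List α} (h : ¬ l.IsChain R) :
    ∃ A x y C, l = A ++ x :: y :: C ∧ (A ++ [x]).IsChain R ∧ ¬ R x y := by
  obtain ⟨a, l, rfl⟩ : ∃ a l', l = a :: l' := by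
    cases l with
    | nil => exact absurd .nil h
    | cons a l' => exact ⟨a, l', rfl⟩
  obtain ⟨M, B, hl, hM, hMc, hj⟩ := exists_maximal_isChain_prefix R a l
  obtain ⟨A, x, rfl⟩ := (eq_nil_or_concat' M).resolve_left hM
  obtain ⟨y, C, rfl⟩ : ∃ y C, B = y :: C := by
    cases B with
    | nil => exact absurd (hl ▸ by simpa using hMc) h
    | cons y C => exact ⟨y, C, rfl⟩
  exact ⟨A, x, y, C, by simp [hl], hMc, by simpa using hj⟩

theorem exists_excursion {R Q : α → α → Prop} {l : List α}
    (hl : l.IsChain (fun a b => R a b ∨ Q a b)) (h : ¬ l.IsChain R) :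
    ∃ A x N b B, l = A ++ (x :: N ++ [b]) ++ B ∧ (A ++ [x]).IsChain R ∧
      (x :: N ++ [b]).IsChain Q ∧ ∀ y ∈ B.head?, R b y := by
  obtain ⟨A, x, y, C, rfl, hA, hxy⟩ := exists_split_of_not_isChain h
  obtain ⟨M, B, hM, hMne, hMc, hj⟩ :=
    exists_maximal_isChain_prefix (fun a b => ¬ R a b ∧ Q a b) x (y :: C)
  obtain ⟨M, b, rfl⟩ := (eq_nil_or_concat' M).resolve_left hMne
  obtain ⟨N, rfl⟩ : ∃ N, M = x :: N := by
    cases M with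
    | nil =>
      simp only [nil_append, cons_append, cons.injEq] at hM
      obtain ⟨rfl, rfl⟩ := hM
      have hxy' : Q x y := (isChain_append_cons_cons.1 hl).2.1.resolve_left hxy
      exact absurd ⟨hxy, hxy'⟩ (hj x (by simp) y (by simp))
    | cons c N =>
      simp only [cons_append, cons.injEq] at hM
      exact ⟨N, by rw [hM.1]⟩
  refine ⟨A, x, N, b, B, by rw [hM]; simp, hA, hMc.imp fun _ _ h => h.2, fun z hz => ?_⟩
  have hbz : R b z ∨ Q b z := by
    rw [hM, ← append_assoc] at hl
    exact (isChain_append.1 hl).2.2 b (by rw [← append_assoc, getLast?_concat]; rfl) z hz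
  have := hj b (by rw [getLast?_concat]; rfl) z hz
  tauto

theorem IsChain.forall_mem_of_mem {R : α → α → Prop} {S : Set α}
    (hR : ∀ u w, R u w → u ∈ S ∧ w ∈ S) {l : List α} (hl : l.IsChain R) {a : α} (ha : a ∈ l)
    (haS : a ∈ S) : ∀ z ∈ l, z ∈ S := by
  induction hl generalizing a with
  | nil => simp at ha
  | singleton b => simp_all
  | cons_cons hxy _ ih =>
    intro z hz
    rcases mem_cons.1 hz with rfl | hz
    · exact (hR _ _ hxy).1
    · exact ih mem_cons_self (hR _ _ hxy).2 z hz

theorem IsChain.forall_mem_of_one_lt_length {R : α → α → Prop} {S : Set α}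
    (hR : ∀ u w, R u w → u ∈ S ∧ w ∈ S) {l : List α} (hl : l.IsChain R) (h : 1 < l.length) :
    ∀ z ∈ l, z ∈ S := by
  obtain ⟨a, b, l, rfl⟩ : ∃ a b l', l = a :: b :: l' := by
    match l, h with
    | a :: b :: l', _ => exact ⟨a, b, l', rfl⟩
  exact hl.forall_mem_of_mem hR mem_cons_self (hR a b hl.rel).1

theorem Nodup.length_le_encard {l : List α} {T : Set α} (hl : l.Nodup)
    (h : ∀ z ∈ l, z ∈ T) : (l.length : ℕ∞) ≤ T.encard := by
  classical
  rw [← toFinset_card_of_nodup hl, ← Set.encard_coe_eq_coe_finsetCard]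
  exact Set.encard_le_encard fun z hz => h z (by simpa using hz)

end List

section CliqueSum

open List

variable {V : Type*}

theorem Set.encard_triple_le (a b c : V) : ({a, b, c} : Set V).encard ≤ 3 := by
  classical
  rw [← Finset.coe_pair, ← Finset.coe_insert, Set.encard_coe_eq_coe_finsetCard]
  exact_mod_cast Finset.card_le_three

theorem range_fin_three (v : Fin 3 → V) : Set.range v = {v 0, v 1, v 2} := by
  ext z
  simp [Fin.exists_fin_succ, eq_comm]

theorem Fin.exists_third_of_ne : ∀ i j : Fin 3, i ≠ j →
    ∃ k, k ≠ i ∧ k ≠ j ∧ ∀ m, m = i ∨ m = j ∨ m = k := by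
  decide

theorem pathLen_append_append_mod_two {A M M' B : List V} (hM : M ≠ []) (hM' : M' ≠ [])
    (h : pathLen M' % 2 = pathLen M % 2) :
    pathLen (A ++ M' ++ B) % 2 = pathLen (A ++ M ++ B) % 2 := by
  have := length_pos_of_ne_nil hM
  have := length_pos_of_ne_nil hM'
  simp only [pathLen, length_append] at *
  omega

theorem IsDipathFrom.splice_s18 {E R T : V → V → Prop} {A M M' B : List V} {a b s t : V}
    (hl : IsDipathFrom E (A ++ M ++ B) s t) (hMa : M.head? = some a) (hMb : M.getLast? = some b)
    (hA : (A ++ [a]).IsChain R) (hB : (b :: B).IsChain R) (hM' : IsDipathFrom T M' a b)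
    (hdisj : ∀ z ∈ M', z ∉ A ++ B) :
    IsDipathFrom (fun u w => R u w ∨ T u w) (A ++ M' ++ B) s t := by
  obtain ⟨hnd, -, hs, ht⟩ := hl
  obtain ⟨hM'nd, hM'c, hM'a, hM'b⟩ := hM'
  refine ⟨?_, ?_, ?_, ?_⟩
  · simp only [nodup_append, mem_append] at hnd ⊢
    grind
  · refine ((hA.left_of_append.imp fun _ _ h => .inl h).append (hM'c.imp fun _ _ h => .inr h)
      fun x hx y hy => ?_).append (hB.tail.imp fun _ _ h => .inl h) fun x hx y hy => ?_
    · obtain rfl : a = y := by simpa [hM'a] using hy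
      exact .inl ((isChain_append.1 hA).2.2 x hx a rfl)
    · obtain rfl : b = x := by simpa [getLast?_append, hM'b] using hx
      exact .inl ((isChain_cons.1 hB).1 y hy)
  · simpa [head?_append, hMa, hM'a] using hs
  · simpa [getLast?_append, hMb, hM'b] using ht

theorem exists_dipath_of_hasDir_hasVia {Q Q' : V → V → Prop} {a b c : V}
    (hDir : ∀ q, HasDir Q a b c q → HasDir Q' a b c q)
    (hVia : ∀ q, HasVia Q a c b q → HasVia Q' a c b q) {M : List V}
    (hM : IsDipathFrom Q M a b) :
    ∃ M', IsDipathFrom Q' M' a b ∧ pathLen M' % 2 = pathLen M % 2 ∧ (c ∉ M → c ∉ M') := by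
  by_cases hd : HasDir Q a b c (pathLen M % 2)
  · obtain ⟨M', hM', hc, hq⟩ := hDir _ hd
    exact ⟨M', hM', hq, fun _ => hc⟩
  · have hcM : c ∈ M := by
      by_contra hc
      exact hd ⟨M, hM, hc, rfl⟩
    obtain ⟨⟨M', hM', -, hq⟩, -⟩ := hVia _ ⟨⟨M, hM, hcM, rfl⟩, hd⟩
    exact ⟨M', hM', hq, fun hc => absurd hcM hc⟩

section Excursion

variable {R Q : V → V → Prop} {S₁ S₂ : Set V}

theorem exists_excursion_mem_inter (hR : ∀ u w, R u w → u ∈ S₁ ∧ w ∈ S₁)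
    (hQ : ∀ u w, Q u w → u ∈ S₂ ∧ w ∈ S₂) {l : List V}
    (hl : l.IsChain (fun a b => R a b ∨ Q a b)) (h : ¬ l.IsChain R)
    (hhead : ∀ y ∈ l.head?, y ∈ S₁) (hlast : ∀ y ∈ l.getLast?, y ∈ S₁) :
    ∃ A x N b B, l = A ++ (x :: N ++ [b]) ++ B ∧ (A ++ [x]).IsChain R ∧
      (x :: N ++ [b]).IsChain Q ∧ (∀ y ∈ B.head?, R b y) ∧ x ∈ S₁ ∩ S₂ ∧ b ∈ S₁ ∩ S₂ := by
  obtain ⟨A, x, N, b, B, rfl, hA, hM, hB⟩ := exists_excursion hl h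
  have hMS₂ := hM.forall_mem_of_one_lt_length hQ (by simp)
  refine ⟨A, x, N, b, B, rfl, hA, hM, hB, ⟨?_, hMS₂ x (by simp)⟩, ⟨?_, hMS₂ b (by simp)⟩⟩
  · rcases A with _ | ⟨a, A⟩
    · exact hhead x (by simp)
    · exact hA.forall_mem_of_mem hR mem_cons_self (hhead a (by simp)) x (by simp)
  · rcases B with _ | ⟨y, B⟩
    · exact hlast b (by rw [append_nil, ← append_assoc, getLast?_concat]; rfl)
    · exact (hR b y (hB y rfl)).1

/-- Two excursions would meet the clique `S₁ ∩ S₂` in four distinct vertices. -/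
theorem exists_single_excursion (hR : ∀ u w, R u w → u ∈ S₁ ∧ w ∈ S₁)
    (hQ : ∀ u w, Q u w → u ∈ S₂ ∧ w ∈ S₂) (hC : (S₁ ∩ S₂).encard ≤ 3) {l : List V} {s t : V}
    (hl : IsDipathFrom (fun a b => R a b ∨ Q a b) l s t) (hs : s ∈ S₁) (ht : t ∈ S₁)
    (h : ¬ l.IsChain R) :
    ∃ A x N b B, l = A ++ (x :: N ++ [b]) ++ B ∧ (A ++ [x]).IsChain R ∧
      (x :: N ++ [b]).IsChain Q ∧ (b :: B).IsChain R ∧ x ∈ S₁ ∩ S₂ ∧ b ∈ S₁ ∩ S₂ := by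
  obtain ⟨hnd, hc, hhead, hlast⟩ := hl
  obtain ⟨A, x, N, b, B, rfl, hA, hM, hbB, hx, hb⟩ :=
    exists_excursion_mem_inter hR hQ hc h (by simpa [hhead]) (by simpa [hlast])
  refine ⟨A, x, N, b, B, rfl, hA, hM, isChain_cons.2 ⟨hbB, ?_⟩, hx, hb⟩
  by_contra hB
  have hBlast : ∀ y ∈ B.getLast?, y ∈ S₁ := fun y hy => by
    rw [getLast?_append_of_ne_nil _ (by rintro rfl; exact hB .nil), hy] at hlast
    exact Option.some_injective _ hlast ▸ ht
  obtain ⟨A₂, x₂, N₂, b₂, B₂, rfl, -, -, -, hx₂, hb₂⟩ :=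
    exists_excursion_mem_inter hR hQ hc.right_of_append hB (fun y hy => (hR b y (hbB y hy)).2)
      hBlast
  have hsub : [x, b, x₂, b₂] <+ A ++ (x :: N ++ [b]) ++ (A₂ ++ (x₂ :: N₂ ++ [b₂]) ++ B₂) :=
    ((by simp : [x, b] <+ x :: N ++ [b]).trans (sublist_append_right A _)).append
      ((by simp : [x₂, b₂] <+ x₂ :: N₂ ++ [b₂]).trans
        ((sublist_append_right A₂ _).trans (sublist_append_left _ B₂)))
  have h4 := (hnd.sublist hsub).length_le_encard (T := S₁ ∩ S₂) fun z hz => by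
    simp only [mem_cons, not_mem_nil, or_false] at hz
    rcases hz with rfl | rfl | rfl | rfl <;> assumption
  norm_num at h4
  exact absurd (h4.trans hC) (by norm_num)

end Excursion

theorem exists_dipath_cliqueSum_of_config {E₁ E₂ E' : V → V → Prop} {S₁ S₂ S' : Set V}
    {v : Fin 3 → V} (hS₁₂ : S₁ ∩ S₂ = {v 0, v 1, v 2}) (hS₁' : S₁ ∩ S' = {v 0, v 1, v 2})
    (hE₁ : ∀ u w, E₁ u w → u ∈ S₁ ∧ w ∈ S₁) (hE₂ : ∀ u w, E₂ u w → u ∈ S₂ ∧ w ∈ S₂)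
    (hE' : ∀ u w, E' u w → u ∈ S' ∧ w ∈ S')
    (hDir : ∀ i j k : Fin 3, i ≠ j → j ≠ k → i ≠ k → ∀ q : ℕ,
      HasDir E₂ (v i) (v j) (v k) q → HasDir E' (v i) (v j) (v k) q)
    (hVia : ∀ i j k : Fin 3, i ≠ j → j ≠ k → i ≠ k → ∀ q : ℕ,
      HasVia E₂ (v i) (v k) (v j) q → HasVia E' (v i) (v k) (v j) q)
    {l : List V} {s t : V} (hl : IsDipathFrom (fun a b => E₁ a b ∨ E₂ a b) l s t)
    (hs : s ∈ S₁) (ht : t ∈ S₁) :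
    ∃ l', IsDipathFrom (fun a b => E₁ a b ∨ E' a b) l' s t ∧ pathLen l' % 2 = pathLen l % 2 := by
  by_cases h : l.IsChain E₁
  · exact ⟨l, ⟨hl.1, h.imp fun _ _ => .inl, hl.2.2⟩, rfl⟩
  obtain ⟨A, x, N, b, B, rfl, hA, hM, hB, hx, hb⟩ :=
    exists_single_excursion hE₁ hE₂ (hS₁₂ ▸ Set.encard_triple_le _ _ _) hl hs ht h
  have hnd := hl.1
  have hMpath : IsDipathFrom E₂ (x :: N ++ [b]) x b :=
    ⟨hnd.sublist ((sublist_append_right A _).trans (sublist_append_left _ B)), hM, rfl,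
      getLast?_concat ..⟩
  have hA₁ := hA.forall_mem_of_mem hE₁ (by simp) hx.1
  have hB₁ := hB.forall_mem_of_mem hE₁ mem_cons_self hb.1
  rw [hS₁₂, ← range_fin_three] at hx hb
  obtain ⟨⟨i, rfl⟩, ⟨j, rfl⟩⟩ := And.intro hx hb
  have hij : i ≠ j := by
    rintro rfl
    exact absurd hMpath.1 (by simp)
  obtain ⟨k, hki, hkj, hcover⟩ := Fin.exists_third_of_ne i j hij
  obtain ⟨M', hM', hpar, hk⟩ := exists_dipath_of_hasDir_hasVia
    (hDir i j k hij hkj.symm hki.symm) (hVia i j k hij hkj.symm hki.symm) hMpath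
  have hM'S' : ∀ z ∈ M', z ∈ S' := hM'.2.1.forall_mem_of_mem hE'
    (mem_of_mem_head? hM'.2.2.1) (hS₁'.ge (range_fin_three v ▸ Set.mem_range_self i)).2
  have hout : ∀ z ∈ A ++ B, z ∉ v i :: N ++ [v j] := by
    simp only [nodup_append, mem_append] at hnd ⊢
    grind
  have hdisj : ∀ z ∈ M', z ∉ A ++ B := by
    intro z hzM' hzAB
    have hz₁ : z ∈ S₁ := (mem_append.1 hzAB).elim
      (hA₁ z <| mem_append_left _ ·) (hB₁ z <| mem_cons_of_mem _ ·)
    obtain ⟨m, rfl⟩ : z ∈ Set.range v := range_fin_three v ▸ hS₁' ▸ ⟨hz₁, hM'S' z hzM'⟩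
    have hzM := hout _ hzAB
    rcases hcover m with rfl | rfl | rfl
    · simp at hzM
    · simp at hzM
    · exact hk hzM hzM'
  exact ⟨A ++ M' ++ B,
    hl.splice_s18 rfl (getLast?_concat ..) hA hB hM' hdisj,
    pathLen_append_append_mod_two (by simp) (ne_nil_of_mem (mem_of_mem_head? hM'.2.2.1)) hpar⟩

end CliqueSum

theorem stmt_18_general {V : Type*} (E₁ E₂ E' : V → V → Prop) (S₁ S₂ S' : Set V)
    (v : Fin 3 → V) (s t : V)
    (hS₁₂ : S₁ ∩ S₂ = {v 0, v 1, v 2}) (hS₁' : S₁ ∩ S' = {v 0, v 1, v 2})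
    (hE₁ : ∀ u w, E₁ u w → u ∈ S₁ ∧ w ∈ S₁)
    (hE₂ : ∀ u w, E₂ u w → u ∈ S₂ ∧ w ∈ S₂)
    (hE' : ∀ u w, E' u w → u ∈ S' ∧ w ∈ S')
    (hs : s ∈ S₁ ∧ s ∉ ({v 0, v 1, v 2} : Set V))
    (ht : t ∈ S₁ ∧ t ∉ ({v 0, v 1, v 2} : Set V))
    (hconfig : ∀ i j k : Fin 3, i ≠ j → j ≠ k → i ≠ k → ∀ q : ℕ,
      (HasDir E₂ (v i) (v j) (v k) q ↔ HasDir E' (v i) (v j) (v k) q) ∧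
      (HasVia E₂ (v i) (v k) (v j) q ↔ HasVia E' (v i) (v k) (v j) q))
    (p : ℕ) :
    (∃ l : List V, IsDipathFrom (fun a b => E₁ a b ∨ E₂ a b) l s t ∧ pathLen l % 2 = p) ↔
    (∃ l : List V, IsDipathFrom (fun a b => E₁ a b ∨ E' a b) l s t ∧ pathLen l % 2 = p) := by
  constructor
  · rintro ⟨l, hl, rfl⟩
    exact exists_dipath_cliqueSum_of_config hS₁₂ hS₁' hE₁ hE₂ hE'
      (fun i j k hij hjk hik q => (hconfig i j k hij hjk hik q).1.1)
      (fun i j k hij hjk hik q => (hconfig i j k hij hjk hik q).2.1) hl hs.1 ht.1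
  · rintro ⟨l, hl, rfl⟩
    exact exists_dipath_cliqueSum_of_config hS₁' hS₁₂ hE₁ hE' hE₂
      (fun i j k hij hjk hik q => (hconfig i j k hij hjk hik q).1.2)
      (fun i j k hij hjk hik q => (hconfig i j k hij hjk hik q).2.2) hl hs.1 ht.1

/-- Let `G = G₁ ⊕_c G₂` be a 3-clique-sum at `c = {v 0, v 1, v 2}`, with `s, t` in
`G₁` outside `c`.  Let `L'` be a graph glued to `G₁` at the same terminals, having the
same parity configuration as `G₂` with respect to `c`.  Then `G` has a simple `s → t`
path of parity `p` iff `G₁ ⊕_c L'` has one. -/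
theorem stmt_18 {V : Type*} (E₁ E₂ E' : V → V → Prop) (S₁ S₂ S' : Set V)
    (v : Fin 3 → V) (hv : Function.Injective v) (s t : V)
    (hS₁₂ : S₁ ∩ S₂ = {v 0, v 1, v 2}) (hS₁' : S₁ ∩ S' = {v 0, v 1, v 2})
    (hE₁ : ∀ u w, E₁ u w → u ∈ S₁ ∧ w ∈ S₁)
    (hE₂ : ∀ u w, E₂ u w → u ∈ S₂ ∧ w ∈ S₂)
    (hE' : ∀ u w, E' u w → u ∈ S' ∧ w ∈ S')
    (hs : s ∈ S₁ ∧ s ∉ ({v 0, v 1, v 2} : Set V))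
    (ht : t ∈ S₁ ∧ t ∉ ({v 0, v 1, v 2} : Set V))
    (hconfig : ∀ i j k : Fin 3, i ≠ j → j ≠ k → i ≠ k → ∀ q : ℕ,
      (HasDir E₂ (v i) (v j) (v k) q ↔ HasDir E' (v i) (v j) (v k) q) ∧
      (HasVia E₂ (v i) (v k) (v j) q ↔ HasVia E' (v i) (v k) (v j) q))
    (p : ℕ) :
    (∃ l : List V, IsDipathFrom (fun a b => E₁ a b ∨ E₂ a b) l s t ∧ pathLen l % 2 = p) ↔
    (∃ l : List V, IsDipathFrom (fun a b => E₁ a b ∨ E' a b) l s t ∧ pathLen l % 2 = p) :=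
  stmt_18_general E₁ E₂ E' S₁ S₂ S' v s t hS₁₂ hS₁' hE₁ hE₂ hE' hs ht hconfig p
end
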